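/- arXiv:2203.10665 — 4 statements merged into one kernel-verified Lean document; each statement's English description precedes it below -/
import Mathlib

section
/- Let X₁, X₂ : Ω → Bool be independent random variables on a probability space (Ω, P), with P(X₁ = true) = p where 0 < p < 1, and P(X₂ = true) = q, and let Y = X₁ XOR X₂. Then X₁ and Y are independent if and only if q = 1/2. -/
open MeasureTheory ProbabilityTheory Set

lemma set_bool_cases (s : Set Bool) :
    s = ∅ ∨ s = {true} ∨ s = {false} ∨ s = Set.univ := by
  by_cases ht : true ∈ s <;> by_cases hf : false ∈ s
  · right; right; right; ext b; cases b <;> simp [ht, hf]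
  · right; left; ext b; cases b <;> simp [ht, hf]
  · right; right; left; ext b; cases b <;> simp [ht, hf]
  · left; ext b; cases b <;> simp [ht, hf]

/-- For independent `X₁, X₂ : Ω → Bool` with `P(X₁ = true) = p`,
`0 < p < 1`, `P(X₂ = true) = q`, and `Y = X₁ XOR X₂`, the variables `X₁` and `Y`
are independent if and only if `q = 1/2`. -/
theorem xor_indep_iff_uniform {Ω : Type*} [MeasurableSpace Ω] {P : Measure Ω}
    [IsProbabilityMeasure P] (X₁ X₂ : Ω → Bool)
    (hX₁ : Measurable X₁) (hX₂ : Measurable X₂)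
    (hIndep : IndepFun X₁ X₂ P) (p q : ENNReal)
    (hp : P (X₁ ⁻¹' {true}) = p) (hp0 : 0 < p) (hp1 : p < 1)
    (hq : P (X₂ ⁻¹' {true}) = q)
    (Y : Ω → Bool) (hY : Y = fun ω => Bool.xor (X₁ ω) (X₂ ω)) :
    IndepFun X₁ Y P ↔ q = 1/2 := by
  have hYm : Measurable Y := by
    rw [hY]; exact (measurable_of_countable (fun ab : Bool × Bool => Bool.xor ab.1 ab.2)).comp
      (hX₁.prodMk hX₂)
  set A := X₁ ⁻¹' {true} with hAdef
  set B := X₂ ⁻¹' {true} with hBdef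
  have hAf : X₁ ⁻¹' {false} = Aᶜ := by ext ω; simp [hAdef]
  have hBf : X₂ ⁻¹' {false} = Bᶜ := by ext ω; simp [hBdef]
  have mA : MeasurableSet A := hX₁ (by trivial)
  have mB : MeasurableSet B := hX₂ (by trivial)
  have hq1 : q ≤ 1 := hq ▸ prob_le_one
  have hp' : p ≤ 1 := le_of_lt hp1
  have hAc : P Aᶜ = 1 - p := by rw [prob_compl_eq_one_sub mA, hp]
  have hBc : P Bᶜ = 1 - q := by rw [prob_compl_eq_one_sub mB, hq]
  have hprod : ∀ s t : Set Bool, P (X₁ ⁻¹' s ∩ X₂ ⁻¹' t) = P (X₁ ⁻¹' s) * P (X₂ ⁻¹' t) :=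
    fun s t => hIndep.measure_inter_preimage_eq_mul s t (by trivial) (by trivial)
  have hABc : P (A ∩ Bᶜ) = p * (1 - q) := by
    have := hprod {true} {false}
    simp only [hAf, hBf, ← hAdef] at this
    rw [this, hp, hBc]
  have hAcB : P (Aᶜ ∩ B) = (1 - p) * q := by
    have := hprod {false} {true}
    simp only [hAf, hBf, ← hBdef] at this
    rw [this, hq, hAc]
  have hAB : P (A ∩ B) = p * q := by
    have := hprod {true} {true}
    simp only [← hAdef, ← hBdef] at this
    rw [this, hp, hq]
  have hAcBc : P (Aᶜ ∩ Bᶜ) = (1 - p) * (1 - q) := by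
    have := hprod {false} {false}
    simp only [hAf, hBf] at this
    rw [this, hAc, hBc]
  have hYt : Y ⁻¹' {true} = (A ∩ Bᶜ) ∪ (Aᶜ ∩ B) := by
    ext ω
    simp only [hY, Set.mem_preimage, Set.mem_union, Set.mem_inter_iff, Set.mem_compl_iff,
      hAdef, hBdef, Set.mem_singleton_iff]
    cases h1 : X₁ ω <;> cases h2 : X₂ ω <;> simp
  have hYf : Y ⁻¹' {false} = (A ∩ B) ∪ (Aᶜ ∩ Bᶜ) := by
    ext ω
    simp only [hY, Set.mem_preimage, Set.mem_union, Set.mem_inter_iff, Set.mem_compl_iff,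
      hAdef, hBdef, Set.mem_singleton_iff]
    cases h1 : X₁ ω <;> cases h2 : X₂ ω <;> simp
  have hAYt : A ∩ Y ⁻¹' {true} = A ∩ Bᶜ := by
    rw [hYt]; ext ω
    simp only [Set.mem_inter_iff, Set.mem_union, Set.mem_compl_iff]; tauto
  have hAYf : A ∩ Y ⁻¹' {false} = A ∩ B := by
    rw [hYf]; ext ω
    simp only [Set.mem_inter_iff, Set.mem_union, Set.mem_compl_iff]; tauto
  have hAcYt : Aᶜ ∩ Y ⁻¹' {true} = Aᶜ ∩ B := by
    rw [hYt]; ext ω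
    simp only [Set.mem_inter_iff, Set.mem_union, Set.mem_compl_iff]; tauto
  have hAcYf : Aᶜ ∩ Y ⁻¹' {false} = Aᶜ ∩ Bᶜ := by
    rw [hYf]; ext ω
    simp only [Set.mem_inter_iff, Set.mem_union, Set.mem_compl_iff]; tauto
  have hPYt : P (Y ⁻¹' {true}) = p * (1 - q) + (1 - p) * q := by
    rw [hYt, measure_union _ (mA.compl.inter mB), hABc, hAcB]
    exact (Set.disjoint_left.mpr fun ω h1 h2 => h2.1 h1.1)
  have hPYf : P (Y ⁻¹' {false}) = p * q + (1 - p) * (1 - q) := by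
    rw [hYf, measure_union _ (mA.compl.inter mB.compl), hAB, hAcBc]
    exact (Set.disjoint_left.mpr fun ω h1 h2 => h2.1 h1.1)
  constructor
  · intro hI
    have key := hI.measure_inter_preimage_eq_mul {true} {true} (by trivial) (by trivial)
    simp only [← hAdef] at key
    rw [hAYt, hABc, hp, hPYt] at key
    have hpne : p ≠ 0 := hp0.ne'
    have hpnetop : p ≠ ⊤ := (lt_of_lt_of_le hp1 le_top).ne
    have key2 : 1 - q = p * (1 - q) + (1 - p) * q :=
      (ENNReal.mul_right_inj hpne hpnetop).mp key
    have expand : (1 : ENNReal) - q = p * (1 - q) + (1 - p) * (1 - q) := by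
      rw [← add_mul, add_tsub_cancel_of_le hp', one_mul]
    have key3 : p * (1 - q) + (1 - p) * (1 - q) = p * (1 - q) + (1 - p) * q :=
      expand.symm.trans key2
    have key4 : (1 - p) * (1 - q) = (1 - p) * q :=
      (ENNReal.add_right_inj (ENNReal.mul_ne_top hpnetop (ENNReal.sub_ne_top ENNReal.one_ne_top))).mp key3
    have h1pne : (1 : ENNReal) - p ≠ 0 := by
      simp [tsub_eq_zero_iff_le, not_le.mpr hp1]
    have key5 : 1 - q = q := (ENNReal.mul_right_inj h1pne (ENNReal.sub_ne_top ENNReal.one_ne_top)).mp key4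
    have hsum : q + q = 1 := by
      conv_rhs => rw [← tsub_add_cancel_of_le hq1, key5]
    rw [ENNReal.eq_div_iff (two_ne_zero) (ENNReal.ofNat_ne_top), two_mul, hsum]
  · intro hq2
    have h2 : (1 : ENNReal) - 1/2 = 1/2 := by
      rw [one_div, ENNReal.one_sub_inv_two]
    have hPYt2 : P (Y ⁻¹' {true}) = 1/2 := by
      rw [hPYt, hq2, h2, ← add_mul, add_tsub_cancel_of_le hp', one_mul]
    have hPYf2 : P (Y ⁻¹' {false}) = 1/2 := by
      rw [hPYf, hq2, h2, ← add_mul, add_tsub_cancel_of_le hp', one_mul]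
    rw [indepFun_iff_measure_inter_preimage_eq_mul]
    intro s t _ _
    rcases set_bool_cases s with rfl | rfl | rfl | rfl <;>
      rcases set_bool_cases t with rfl | rfl | rfl | rfl <;>
      simp only [Set.preimage_empty, Set.preimage_univ, Set.empty_inter, Set.inter_empty,
        Set.univ_inter, Set.inter_univ, measure_empty, measure_univ, zero_mul, mul_zero,
        one_mul, mul_one, hAf, ← hAdef]
    · rw [hAYt, hABc, hp, hPYt2, hq2, h2]
    · rw [hAYf, hAB, hp, hPYf2, hq2]
    · rw [hAcYt, hAcB, hAc, hPYt2, hq2]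
    · rw [hAcYf, hAcBc, hAc, hPYf2, hq2, h2]
end

section
/- Let X₁, X₂, X₃ : Ω → Bool be mutually independent random variables on a probability space (Ω, P), with X₁ and X₂ each uniformly distributed on Bool and P(X₃ = true) = f for some f ∈ [0,1], and let Y = (X₁ XOR X₂) OR X₃. Then X₁ and Y are independent, and X₂ and Y are independent, for every value of f. -/
/-!
One-time pad: since `X₂` is uniform and independent of `(X₁, X₃)`, the pair
`(X₁ XOR X₂, X₃)` has the same law as `(X₂, X₃)` whatever the value of `X₁`, so it is
independent of `X₁`. `Y` is a function of this pair, hence independent of `X₁`; the roles of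
`X₁` and `X₂` are symmetric.
-/

open MeasureTheory ProbabilityTheory

section
variable {Ω α β : Type*} [MeasurableSpace Ω] [MeasurableSpace α] [MeasurableSpace β]
  {P : Measure Ω} [IsProbabilityMeasure P]

/-- The skew product `(a, w) ↦ (a, g a w)` preserves `law X ⊗ law W`. -/
lemma ProbabilityTheory.IndepFun.indepFun_skew_of_map_eq {X : Ω → α} {W : Ω → β}
    {g : α → β → β} (hX : Measurable X) (hW : Measurable W)
    (hg : Measurable (Function.uncurry g)) (hinv : ∀ a, (P.map W).map (g a) = P.map W)
    (hXW : IndepFun X W P) :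
    IndepFun X (fun ω => g (X ω) (W ω)) P := by
  have hT : MeasurePreserving (fun p : α × β => (p.1, g p.1 p.2))
      ((P.map X).prod (P.map W)) ((P.map X).prod (P.map W)) :=
    (MeasurePreserving.id _).skew_product hg (ae_of_all _ hinv)
  have hlaw : P.map (fun ω => (X ω, g (X ω) (W ω))) = (P.map X).prod (P.map W) := by
    rw [← hT.map_eq, ← hXW.map_prod_eq_prod_map_map hX.aemeasurable hW.aemeasurable,
      Measure.map_map hT.measurable (hX.prodMk hW)]
    rfl
  have hmarg : P.map (fun ω => g (X ω) (W ω)) = P.map W := by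
    have := Measure.isProbabilityMeasure_map (μ := P) hX.aemeasurable
    rw [← Measure.snd_prod (μ := P.map X) (ν := P.map W), ← hlaw, Measure.snd_map_prodMk hX]
  have hgXW : Measurable fun ω => g (X ω) (W ω) := hg.comp (hX.prodMk hW)
  rw [indepFun_iff_map_prod_eq_prod_map_map hX.aemeasurable hgXW.aemeasurable, hlaw, hmarg]

end

lemma Bool.map_xor_eq_self {ν : Measure Bool} (hν : ν {true} = ν {false}) (b : Bool) :
    ν.map (Bool.xor b) = ν := by
  rw [Measure.ext_iff_singleton]
  intro c
  have hpre : Bool.xor b ⁻¹' {c} = {Bool.xor b c} := by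
    ext x; cases b <;> cases c <;> cases x <;> simp
  rw [Measure.map_apply (measurable_of_countable _) (measurableSet_singleton c), hpre]
  cases b <;> cases c <;> simp [hν]

section
variable {Ω : Type*} [MeasurableSpace Ω] {P : Measure Ω} [IsProbabilityMeasure P]

lemma measure_preimage_false_eq_half {U : Ω → Bool} (hU : Measurable U)
    (h : P (U ⁻¹' {true}) = 1/2) : P (U ⁻¹' {false}) = 1/2 := by
  rw [show ({false} : Set Bool) = {true}ᶜ from (Bool.compl_singleton true).symm,
    Set.preimage_compl, prob_compl_eq_one_sub (hU (measurableSet_singleton _)), h,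
    one_div, ENNReal.one_sub_inv_two]

lemma indepFun_xor_prodMk {X U V : Ω → Bool} (hX : Measurable X) (hU : Measurable U)
    (hV : Measurable V) (hXUV : IndepFun X (fun ω => (U ω, V ω)) P) (hUV : IndepFun U V P)
    (hU_unif : P (U ⁻¹' {true}) = 1/2) :
    IndepFun X (fun ω => (Bool.xor (X ω) (U ω), V ω)) P := by
  have hU_inv (b : Bool) : (P.map U).map (Bool.xor b) = P.map U := by
    refine Bool.map_xor_eq_self ?_ b
    rw [Measure.map_apply hU (measurableSet_singleton _),
      Measure.map_apply hU (measurableSet_singleton _), hU_unif,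
      measure_preimage_false_eq_half hU hU_unif]
  refine hXUV.indepFun_skew_of_map_eq (g := fun b p => (Bool.xor b p.1, p.2)) hX
    (hU.prodMk hV) (measurable_of_countable _) fun b => ?_
  rw [hUV.map_prod_eq_prod_map_map hU.aemeasurable hV.aemeasurable]
  calc ((P.map U).prod (P.map V)).map (Prod.map (Bool.xor b) id)
      = ((P.map U).map (Bool.xor b)).prod ((P.map V).map id) :=
        (Measure.map_prod_map _ _ (measurable_of_countable _) measurable_id).symm
    _ = (P.map U).prod (P.map V) := by rw [hU_inv, Measure.map_id]

end

theorem xor_or_faithfulness_fails_general {Ω : Type*} [MeasurableSpace Ω] {P : Measure Ω}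
    [IsProbabilityMeasure P] (X₁ X₂ X₃ : Ω → Bool)
    (hX₁ : Measurable X₁) (hX₂ : Measurable X₂) (hX₃ : Measurable X₃)
    (hIndep : iIndepFun ![X₁, X₂, X₃] P)
    (hu₁ : P (X₁ ⁻¹' {true}) = 1/2) (hu₂ : P (X₂ ⁻¹' {true}) = 1/2)
    (Y : Ω → Bool) (hY : Y = fun ω => (Bool.xor (X₁ ω) (X₂ ω)) || X₃ ω) :
    IndepFun X₁ Y P ∧ IndepFun X₂ Y P := by
  have hmeas : ∀ i, Measurable (![X₁, X₂, X₃] i) := fun i => by fin_cases i <;> assumption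
  have hor : Measurable fun p : Bool × Bool => p.1 || p.2 := measurable_of_countable _
  subst hY
  constructor
  · have h₁ : IndepFun X₁ (fun ω => (Bool.xor (X₁ ω) (X₂ ω), X₃ ω)) P :=
      indepFun_xor_prodMk hX₁ hX₂ hX₃
        (hIndep.indepFun_prodMk hmeas 1 2 0 (by decide) (by decide)).symm
        (hIndep.indepFun (by decide : (1 : Fin 3) ≠ 2)) hu₂
    exact h₁.comp measurable_id hor
  · have h₂ : IndepFun X₂ (fun ω => (Bool.xor (X₂ ω) (X₁ ω), X₃ ω)) P :=
      indepFun_xor_prodMk hX₂ hX₁ hX₃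
        (hIndep.indepFun_prodMk hmeas 0 2 1 (by decide) (by decide)).symm
        (hIndep.indepFun (by decide : (0 : Fin 3) ≠ 2)) hu₁
    simp_rw [Bool.xor_comm (X₁ _)]
    exact h₂.comp measurable_id hor

/-- **Example 1 of the paper: failure of faithfulness.**
For mutually independent `X₁, X₂, X₃ : Ω → Bool` with `X₁, X₂` uniform,
`P(X₃ = true) = f` for some `f ∈ [0,1]`, and `Y = (X₁ XOR X₂) OR X₃`,
the variables `X₁` and `Y` are independent, and `X₂` and `Y` are independent. -/
theorem xor_or_faithfulness_fails {Ω : Type*} [MeasurableSpace Ω] {P : Measure Ω}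
    [IsProbabilityMeasure P] (X₁ X₂ X₃ : Ω → Bool)
    (hX₁ : Measurable X₁) (hX₂ : Measurable X₂) (hX₃ : Measurable X₃)
    (hIndep : iIndepFun ![X₁, X₂, X₃] P)
    (hu₁ : P (X₁ ⁻¹' {true}) = 1/2) (hu₂ : P (X₂ ⁻¹' {true}) = 1/2)
    (f : ENNReal) (hf : f ≤ 1) (hX₃f : P (X₃ ⁻¹' {true}) = f)
    (Y : Ω → Bool) (hY : Y = fun ω => (Bool.xor (X₁ ω) (X₂ ω)) || X₃ ω) :
    IndepFun X₁ Y P ∧ IndepFun X₂ Y P :=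
  xor_or_faithfulness_fails_general X₁ X₂ X₃ hX₁ hX₂ hX₃ hIndep hu₁ hu₂ Y hY
end

section
/- Let (Ω, 𝓕, P) be a standard Borel probability space and X₁, X₂, X₃ : Ω → Bool mutually independent random variables, with X₁ and X₂ each uniformly distributed on Bool and P(X₃ = true) = f for some f ∈ [0,1), and let Y = (X₁ XOR X₂) OR X₃. Then X₁ and Y are NOT conditionally independent given the σ-algebra generated by the pair (X₂, X₃). -/
/-!
On the atom `E = {X₂ = false, X₃ = false}` of `σ(X₂, X₃)`, which has probability `(1 - f) / 2 > 0`,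
`Y` coincides with `X₁`. Conditional independence given `(X₂, X₃)` restricts to plain independence
under `P` conditioned on `E`, so `X₁` would be independent of itself there and
`P[X₁ = true | E] ∈ {0, 1}`. But `X₁` is independent of `(X₂, X₃)`, so `P[X₁ = true | E] = 1/2`.
-/

open MeasureTheory ProbabilityTheory

namespace ProbabilityTheory

section CondIndepOnAtom

variable {Ω γ β β' : Type*} {mΩ : MeasurableSpace Ω} {mγ : MeasurableSpace γ}
  [MeasurableSingletonClass γ] {μ : Measure Ω} {Z : Ω → γ}

lemma setIntegral_preimage_singleton_of_factorsThrough (hZ : Measurable Z) {g : Ω → ℝ}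
    (hg : g.FactorsThrough Z) {z : γ} {ω₀ : Ω} (hω₀ : Z ω₀ = z) :
    ∫ ω in Z ⁻¹' {z}, g ω ∂μ = μ.real (Z ⁻¹' {z}) * g ω₀ := by
  rw [setIntegral_congr_fun (hZ (measurableSet_singleton z))
    (fun ω hω ↦ hg (hω.trans hω₀.symm)), setIntegral_const, smul_eq_mul]

lemma setIntegral_condExp_indicator [IsFiniteMeasure μ] {m : MeasurableSpace Ω} (hm : m ≤ mΩ)
    {E S : Set Ω} (hE : MeasurableSet[m] E) (hS : MeasurableSet[mΩ] S) :
    ∫ ω in E, (μ⟦S | m⟧) ω ∂μ = μ.real (E ∩ S) := by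
  rw [setIntegral_condExp hm ((integrable_const (1 : ℝ)).indicator hS) hE, setIntegral_indicator hS]
  simp [Measure.real, Set.inter_comm]

/-- Conditional expectations given `Z` are constant on the atom `Z ⁻¹' {z}`, so integrating the
factorization `μ⟦A ∩ B | Z⟧ = μ⟦A | Z⟧ * μ⟦B | Z⟧` over the atom gives this identity. -/
lemma CondIndepFun.measureReal_inter_preimage_mul [StandardBorelSpace Ω] [IsFiniteMeasure μ]
    {mβ : MeasurableSpace β} {mβ' : MeasurableSpace β'} {X : Ω → β} {Y : Ω → β'}
    (hZ : Measurable Z) (hX : Measurable X) (hY : Measurable Y)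
    (h : CondIndepFun (mγ.comap Z) hZ.comap_le X Y μ) (z : γ) {s : Set β} {t : Set β'}
    (hs : MeasurableSet s) (ht : MeasurableSet t) :
    μ.real (Z ⁻¹' {z} ∩ (X ⁻¹' s ∩ Y ⁻¹' t)) * μ.real (Z ⁻¹' {z})
      = μ.real (Z ⁻¹' {z} ∩ X ⁻¹' s) * μ.real (Z ⁻¹' {z} ∩ Y ⁻¹' t) := by
  rcases (Z ⁻¹' {z}).eq_empty_or_nonempty with hE | ⟨ω₀, hω₀⟩
  · simp [hE]
  have hE : MeasurableSet[mγ.comap Z] (Z ⁻¹' {z}) := ⟨{z}, measurableSet_singleton z, rfl⟩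
  have hconst {S : Set Ω} (hS : MeasurableSet S) :
      μ.real (Z ⁻¹' {z} ∩ S) = μ.real (Z ⁻¹' {z}) * (μ⟦S | mγ.comap Z⟧) ω₀ := by
    rw [← setIntegral_condExp_indicator hZ.comap_le hE hS,
      setIntegral_preimage_singleton_of_factorsThrough hZ
        stronglyMeasurable_condExp.factorsThrough hω₀]
  have hmul : ∫ ω in Z ⁻¹' {z}, (μ⟦X ⁻¹' s ∩ Y ⁻¹' t | mγ.comap Z⟧) ω ∂μ
      = μ.real (Z ⁻¹' {z}) * ((μ⟦X ⁻¹' s | mγ.comap Z⟧) ω₀ * (μ⟦Y ⁻¹' t | mγ.comap Z⟧) ω₀) := by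
    rw [setIntegral_congr_ae (hZ.comap_le _ hE)
      (((condIndepFun_iff_condExp_inter_preimage_eq_mul hX hY).1 h s t hs ht).mono
        fun _ h _ ↦ h)]
    exact setIntegral_preimage_singleton_of_factorsThrough hZ
      (stronglyMeasurable_condExp.mul stronglyMeasurable_condExp).factorsThrough hω₀
  rw [setIntegral_condExp_indicator hZ.comap_le hE ((hX hs).inter (hY ht))] at hmul
  rw [hmul, hconst (hX hs), hconst (hY ht)]
  ring

lemma CondIndepFun.indepFun_cond_preimage_singleton [StandardBorelSpace Ω] [IsFiniteMeasure μ]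
    {mβ : MeasurableSpace β} {mβ' : MeasurableSpace β'} {X : Ω → β} {Y : Ω → β'}
    (hZ : Measurable Z) (hX : Measurable X) (hY : Measurable Y)
    (h : CondIndepFun (mγ.comap Z) hZ.comap_le X Y μ) (z : γ) :
    IndepFun X Y μ[|Z ⁻¹' {z}] := by
  rw [indepFun_iff_measure_inter_preimage_eq_mul]
  intro s t hs ht
  by_cases hE0 : μ (Z ⁻¹' {z}) = 0
  · simp [cond_eq_zero_of_meas_eq_zero hE0]
  have key := h.measureReal_inter_preimage_mul hZ hX hY z hs ht
  simp only [measureReal_def, ← ENNReal.toReal_mul] at key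
  rw [ENNReal.toReal_eq_toReal_iff' (by finiteness) (by finiteness)] at key
  simp only [cond_apply (hZ (measurableSet_singleton z))]
  calc (μ (Z ⁻¹' {z}))⁻¹ * μ (Z ⁻¹' {z} ∩ (X ⁻¹' s ∩ Y ⁻¹' t))
      = μ (Z ⁻¹' {z} ∩ (X ⁻¹' s ∩ Y ⁻¹' t)) * μ (Z ⁻¹' {z}) * (μ (Z ⁻¹' {z}))⁻¹
          * (μ (Z ⁻¹' {z}))⁻¹ := by
        rw [ENNReal.mul_inv_cancel_right hE0 (measure_ne_top μ _), mul_comm]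
    _ = _ := by rw [key]; ring

end CondIndepOnAtom

section

variable {Ω β γ : Type*} {mΩ : MeasurableSpace Ω} {mβ : MeasurableSpace β}
  {mγ : MeasurableSpace γ} {μ : Measure Ω}

lemma IndepFun.measure_preimage_eq_zero_or_one_of_self [IsFiniteMeasure μ] {X : Ω → β}
    (h : IndepFun X X μ) {s : Set β} (hs : MeasurableSet s) :
    μ (X ⁻¹' s) = 0 ∨ μ (X ⁻¹' s) = 1 :=
  measure_eq_zero_or_one_of_indep_self ((IndepFun_iff_Indep X X μ).1 h) ⟨s, hs, rfl⟩

lemma IndepFun.cond_preimage_eq [IsFiniteMeasure μ] {X : Ω → β} {W : Ω → γ}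
    (h : IndepFun X W μ) (hW : Measurable W) {s : Set β} {t : Set γ}
    (hs : MeasurableSet s) (ht : MeasurableSet t) (h0 : μ (W ⁻¹' t) ≠ 0) :
    μ[X ⁻¹' s | W ⁻¹' t] = μ (X ⁻¹' s) := by
  rw [cond_apply (hW ht), Set.inter_comm, h.measure_inter_preimage_eq_mul s t hs ht, mul_comm,
    ENNReal.mul_inv_cancel_right h0 (measure_ne_top μ _)]

lemma measure_preimage_false_ne_zero [IsProbabilityMeasure μ] {X : Ω → Bool}
    (hX : Measurable X) (h : μ (X ⁻¹' {true}) ≠ 1) : μ (X ⁻¹' {false}) ≠ 0 := by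
  have hcompl : X ⁻¹' {false} = (X ⁻¹' {true})ᶜ := by ext; simp
  rwa [hcompl, ne_eq, prob_compl_eq_zero_iff (hX (measurableSet_singleton true))]

end

end ProbabilityTheory

/-- In the paper's Example 1, on a standard Borel probability space,
with `f ∈ [0,1)`, the source `X₁` is NOT conditionally independent of the target
`Y = (X₁ XOR X₂) OR X₃` given the σ-algebra generated by the pair `(X₂, X₃)`
(causal minimality holds although faithfulness fails). -/
theorem xor_or_not_condIndep {Ω : Type*} [MeasurableSpace Ω] [StandardBorelSpace Ω]
    {P : Measure Ω} [IsProbabilityMeasure P] (X₁ X₂ X₃ : Ω → Bool)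
    (hX₁ : Measurable X₁) (hX₂ : Measurable X₂) (hX₃ : Measurable X₃)
    (hIndep : iIndepFun ![X₁, X₂, X₃] P)
    (hu₁ : P (X₁ ⁻¹' {true}) = 1/2) (hu₂ : P (X₂ ⁻¹' {true}) = 1/2)
    (f : ENNReal) (hf1 : f < 1) (hX₃f : P (X₃ ⁻¹' {true}) = f)
    (Y : Ω → Bool) (hY : Y = fun ω => (Bool.xor (X₁ ω) (X₂ ω)) || X₃ ω) :
    ¬ CondIndepFun (MeasurableSpace.comap (fun ω => (X₂ ω, X₃ ω)) inferInstance)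
        ((hX₂.prodMk hX₃).comap_le) X₁ Y P := by
  intro hCI
  set E := (fun ω => (X₂ ω, X₃ ω)) ⁻¹' {(false, false)}
  have hE : MeasurableSet E := (hX₂.prodMk hX₃) (measurableSet_singleton _)
  have hPE : P E ≠ 0 := by
    have h₂₃ : IndepFun X₂ X₃ P := hIndep.indepFun (i := 1) (j := 2) (by decide)
    have hsplit : E = X₂ ⁻¹' {false} ∩ X₃ ⁻¹' {false} := by ext; simp [E]
    rw [hsplit, h₂₃.measure_inter_preimage_eq_mul _ _ (measurableSet_singleton _)
      (measurableSet_singleton _)]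
    exact mul_ne_zero (measure_preimage_false_ne_zero hX₂ (by norm_num [hu₂]))
      (measure_preimage_false_ne_zero hX₃ (hX₃f ▸ hf1.ne))
  have hYm : Measurable Y := hY ▸ (measurable_of_countable fun p : Bool × Bool × Bool =>
    Bool.xor p.1 p.2.1 || p.2.2).comp (hX₁.prodMk (hX₂.prodMk hX₃))
  have hYX : Y =ᵐ[P[|E]] X₁ := (ae_cond_mem hE).mono fun ω hω => by
    obtain ⟨h₂, h₃⟩ := Prod.mk.inj hω
    simp [hY, h₂, h₃]
  have hself : IndepFun X₁ X₁ P[|E] :=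
    (hCI.indepFun_cond_preimage_singleton (hX₂.prodMk hX₃) hX₁ hYm (false, false)).congr
      (ae_eq_refl _) hYX
  have hmeas : ∀ i, Measurable (![X₁, X₂, X₃] i) := by
    intro i; fin_cases i <;> assumption
  have hcond : P[X₁ ⁻¹' {true} | E] = 1/2 :=
    hu₁ ▸ (hIndep.indepFun_prodMk hmeas 1 2 0 (by decide) (by decide)).symm.cond_preimage_eq
      (hX₂.prodMk hX₃) (measurableSet_singleton _) (measurableSet_singleton _) hPE
  have h01 := hself.measure_preimage_eq_zero_or_one_of_self (measurableSet_singleton true)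
  rw [hcond] at h01
  norm_num at h01
end

section
/- Let n ≥ 2 and let (Ω, 𝓕, P) be a standard Borel probability space carrying mutually independent random variables X₁, …, Xₙ : Ω → Bool, each uniformly distributed on Bool, and let Y = X₁ XOR X₂ XOR ⋯ XOR Xₙ. Then for every proper subset S ⊊ {2,…,n}, X₁ and Y are conditionally independent given the σ-algebra generated by (X_i)_{i ∈ S}; but X₁ and Y are NOT conditionally independent given the σ-algebra generated by (X_i)_{i ∈ {2,…,n}}. -/
open MeasureTheory ProbabilityTheory

/-!
`Bool` is a Boolean ring in Mathlib, with `+` being xor, so `Y = ∑ i, X i`.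
If some source `X j`, `j ≠ i₀`, is missing from the conditioning set, then `Y = X j + W` with `W`
a function of the other sources. Adding an independent uniform bit makes `Y` uniform and
independent of `(X i₀, X_S)`, and this forces conditional independence of `X i₀` and `Y` given
`X_S`. Given all other sources, `Y = X i₀ + c` with `c` known: the conditional probability of
`X i₀ = Y = true` is then `1/2` on `{c = false}` and `0` elsewhere, whereas the product of the
two conditional probabilities is constantly `1/4`.
-/

theorem List.foldr_xor_ofFn_eq_sum {n : ℕ} (x : Fin n → Bool) :
    (List.ofFn x).foldr xor false = ∑ i, x i := by
  rw [← List.sum_ofFn]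
  rfl

namespace ProbabilityTheory

variable {Ω β γ : Type*} {mΩ : MeasurableSpace Ω} {μ : Measure Ω}
  [MeasurableSpace β] [MeasurableSpace γ]

theorem indepFun_of_measure_inter_preimage_singleton_eq_mul [Countable β]
    [MeasurableSingletonClass β] {f : Ω → β} {g : Ω → γ} (hf : Measurable f)
    (h : ∀ b t, MeasurableSet t → μ (f ⁻¹' {b} ∩ g ⁻¹' t) = μ (f ⁻¹' {b}) * μ (g ⁻¹' t)) :
    IndepFun f g μ := by
  have fibers (ν : Measure Ω) (s : Set β) : ∑' b : s, ν (f ⁻¹' {↑b}) = ν (f ⁻¹' s) :=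
    tsum_measure_preimage_singleton s.to_countable fun b _ ↦ hf (measurableSet_singleton b)
  rw [indepFun_iff_measure_inter_preimage_eq_mul]
  intro s t hs ht
  calc μ (f ⁻¹' s ∩ g ⁻¹' t) = ∑' b : s, (μ.restrict (g ⁻¹' t)) (f ⁻¹' {↑b}) := by
        rw [fibers, Measure.restrict_apply (hf hs)]
    _ = ∑' b : s, μ (f ⁻¹' {↑b}) * μ (g ⁻¹' t) := by
        refine tsum_congr fun b ↦ ?_
        rw [Measure.restrict_apply (hf (measurableSet_singleton _)), h _ t ht]
    _ = μ (f ⁻¹' s) * μ (g ⁻¹' t) := by rw [ENNReal.tsum_mul_right, fibers]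

theorem iIndepFun.indepFun_finset_of_notMem {ι : Type*} {X : ι → Ω → β} (hX : ∀ i, Measurable (X i))
    (h : iIndepFun X μ) {T : Finset ι} {j : ι} (hj : j ∉ T) :
    IndepFun (X j) (fun ω (i : T) ↦ X i ω) μ :=
  (h.indepFun_finset {j} T (Finset.disjoint_singleton_left.2 hj) hX).comp
    (measurable_pi_apply (⟨j, Finset.mem_singleton_self j⟩ : ({j} : Finset ι))) measurable_id

theorem measure_preimage_bool_eq_half [IsProbabilityMeasure μ] {U : Ω → Bool} (hU : Measurable U)
    (h : μ (U ⁻¹' {true}) = 1 / 2) (b : Bool) : μ (U ⁻¹' {b}) = 2⁻¹ := by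
  cases b
  · have hfalse : U ⁻¹' {false} = (U ⁻¹' {true})ᶜ := by ext; simp
    rw [hfalse, prob_compl_eq_one_sub (hU (measurableSet_singleton _)), h, one_div,
      ENNReal.one_sub_inv_two]
  · rwa [one_div] at h

variable {G : Type*} [AddGroup G] [Countable G] [MeasurableSpace G] [MeasurableSingletonClass G]
  {U W : Ω → G} {V : Ω → γ} {p : ENNReal}

theorem measure_add_preimage_singleton_inter (hU : Measurable U) (hW : Measurable W)
    (hV : Measurable V) (hunif : ∀ g, μ (U ⁻¹' {g}) = p)
    (hind : IndepFun U (fun ω ↦ (W ω, V ω)) μ) (g : G) {t : Set γ} (ht : MeasurableSet t) :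
    μ ((U + W) ⁻¹' {g} ∩ V ⁻¹' t) = p * μ (V ⁻¹' t) := by
  have hsplit : (U + W) ⁻¹' {g} ∩ V ⁻¹' t = ⋃ w, U ⁻¹' {g - w} ∩ (W ⁻¹' {w} ∩ V ⁻¹' t) := by
    ext ω; simp [eq_sub_iff_add_eq]
  have hfibers : ⋃ w, W ⁻¹' {w} ∩ V ⁻¹' t = V ⁻¹' t := by
    rw [← Set.iUnion_inter, ← Set.preimage_iUnion, Set.iUnion_singleton_eq_range, Set.range_id',
      Set.preimage_univ, Set.univ_inter]
  have hdisj : Pairwise (Function.onFun Disjoint fun w ↦ W ⁻¹' {w} ∩ V ⁻¹' t) := fun w w' hww' ↦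
    ((Set.disjoint_singleton.2 hww').preimage W).mono Set.inter_subset_left Set.inter_subset_left
  have hmeas (w : G) : MeasurableSet (W ⁻¹' {w} ∩ V ⁻¹' t) :=
    (hW (measurableSet_singleton w)).inter (hV ht)
  calc μ ((U + W) ⁻¹' {g} ∩ V ⁻¹' t)
      = ∑' w, μ (U ⁻¹' {g - w} ∩ (W ⁻¹' {w} ∩ V ⁻¹' t)) := by
        rw [hsplit, measure_iUnion (fun w w' hww' ↦ (hdisj hww').mono Set.inter_subset_right
          Set.inter_subset_right) fun w ↦ (hU (measurableSet_singleton _)).inter (hmeas w)]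
    _ = ∑' w, p * μ (W ⁻¹' {w} ∩ V ⁻¹' t) := by
        refine tsum_congr fun w ↦ ?_
        rw [← Set.mk_preimage_prod, hind.measure_inter_preimage_eq_mul _ _
          (measurableSet_singleton _) ((measurableSet_singleton w).prod ht), hunif]
    _ = p * μ (V ⁻¹' t) := by rw [ENNReal.tsum_mul_left, ← measure_iUnion hdisj hmeas, hfibers]

theorem measure_add_preimage_singleton [IsProbabilityMeasure μ] (hU : Measurable U)
    (hW : Measurable W) (hV : Measurable V) (hunif : ∀ g, μ (U ⁻¹' {g}) = p)
    (hind : IndepFun U (fun ω ↦ (W ω, V ω)) μ) (g : G) :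
    μ ((U + W) ⁻¹' {g}) = p := by
  simpa using measure_add_preimage_singleton_inter hU hW hV hunif hind g MeasurableSet.univ

theorem indepFun_add_of_uniform [IsProbabilityMeasure μ] [MeasurableAdd₂ G] (hU : Measurable U)
    (hW : Measurable W) (hV : Measurable V) (hunif : ∀ g, μ (U ⁻¹' {g}) = p)
    (hind : IndepFun U (fun ω ↦ (W ω, V ω)) μ) :
    IndepFun (U + W) V μ :=
  indepFun_of_measure_inter_preimage_singleton_eq_mul (hU.add hW) fun g _ ht ↦ by
    rw [measure_add_preimage_singleton_inter hU hW hV hunif hind g ht,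
      measure_add_preimage_singleton hU hW hV hunif hind g]

theorem condExp_preimage_ae_eq_of_indepFun [IsFiniteMeasure μ] {f : Ω → β} {g : Ω → γ}
    (hf : Measurable f) (hg : Measurable g) (h : IndepFun f g μ) {s : Set β}
    (hs : MeasurableSet s) :
    μ⟦f ⁻¹' s | MeasurableSpace.comap g inferInstance⟧ =ᵐ[μ] fun _ ↦ μ.real (f ⁻¹' s) := by
  refine (condExp_indep_eq hf.comap_le hg.comap_le
    (stronglyMeasurable_const.indicator ⟨s, hs, rfl⟩) ((IndepFun_iff_Indep f g μ).1 h)).trans ?_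
  simp [hf hs]

theorem condIndepFun_of_indepFun_prod [StandardBorelSpace Ω] [IsFiniteMeasure μ] {β' : Type*}
    [MeasurableSpace β'] {X : Ω → β} {Y : Ω → β'} {Z : Ω → γ} (hX : Measurable X)
    (hY : Measurable Y) (hZ : Measurable Z) (h : IndepFun (fun ω ↦ (X ω, Z ω)) Y μ) :
    X ⟂ᵢ[Z, hZ; μ] Y := by
  rw [condIndepFun_iff_condExp_inter_preimage_eq_mul hX hY]
  intro s t hs ht
  have hXZ : Measurable fun ω ↦ (X ω, Z ω) := hX.prodMk hZ
  set m := MeasurableSpace.comap Z inferInstance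
  set m' := MeasurableSpace.comap (fun ω ↦ (X ω, Z ω)) inferInstance
  have hmm' : m ≤ m' := Measurable.comap_le (measurable_snd.comp (comap_measurable _))
  have hXs : MeasurableSet[m'] (X ⁻¹' s) := measurable_fst.comp (comap_measurable _) hs
  have hYm : μ⟦Y ⁻¹' t | m⟧ =ᵐ[μ] fun _ ↦ μ.real (Y ⁻¹' t) :=
    condExp_preimage_ae_eq_of_indepFun hY hZ (h.symm.comp measurable_id measurable_snd) ht
  have hYm' : μ⟦Y ⁻¹' t | m'⟧ =ᵐ[μ] fun _ ↦ μ.real (Y ⁻¹' t) :=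
    condExp_preimage_ae_eq_of_indepFun hY hXZ h.symm ht
  calc μ⟦X ⁻¹' s ∩ Y ⁻¹' t | m⟧
      =ᵐ[μ] μ[μ⟦X ⁻¹' s ∩ Y ⁻¹' t | m'⟧ | m] := (condExp_condExp_of_le hmm' hXZ.comap_le).symm
    _ =ᵐ[μ] μ[(X ⁻¹' s).indicator (μ⟦Y ⁻¹' t | m'⟧) | m] := by
        refine condExp_congr_ae ?_
        rw [← Set.indicator_indicator]
        exact condExp_indicator ((integrable_const 1).indicator (hY ht)) hXs
    _ =ᵐ[μ] μ[μ.real (Y ⁻¹' t) • (X ⁻¹' s).indicator (fun _ ↦ (1 : ℝ)) | m] := by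
        refine condExp_congr_ae (hYm'.mono fun ω hω ↦ ?_)
        by_cases hωs : ω ∈ X ⁻¹' s <;> simp [hωs, hω]
    _ =ᵐ[μ] μ.real (Y ⁻¹' t) • μ⟦X ⁻¹' s | m⟧ := condExp_smul _ _ _
    _ =ᵐ[μ] fun ω ↦ (μ⟦X ⁻¹' s | m⟧) ω * (μ⟦Y ⁻¹' t | m⟧) ω :=
        hYm.mono fun ω hω ↦ by simp [hω, mul_comm]

theorem not_condIndepFun_add_comp [StandardBorelSpace Ω] [IsProbabilityMeasure μ]
    {U : Ω → Bool} {Z : Ω → γ} (hU : Measurable U) (hZ : Measurable Z) {c : γ → Bool}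
    (hc : Measurable c) (hunif : ∀ b, μ (U ⁻¹' {b}) = 2⁻¹) (hind : IndepFun U Z μ) :
    ¬ U ⟂ᵢ[Z, hZ; μ] (U + c ∘ Z) := by
  intro hcond
  have hcZ : Measurable (c ∘ Z) := hc.comp hZ
  have hind' : IndepFun U (fun ω ↦ ((c ∘ Z) ω, Z ω)) μ :=
    hind.comp measurable_id (hc.prodMk measurable_id)
  have hY : Measurable (U + c ∘ Z) := hU.add hcZ
  set m := MeasurableSpace.comap Z inferInstance
  set A := U ⁻¹' {true}
  set B := Z ⁻¹' (c ⁻¹' {false})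
  have half : μ.real A = 1 / 2 := by simp [A, measureReal_def, hunif]
  have hAm : μ⟦A | m⟧ =ᵐ[μ] fun _ ↦ 1 / 2 := half ▸
    condExp_preimage_ae_eq_of_indepFun hU hZ hind (measurableSet_singleton true)
  have halfY : μ.real ((U + c ∘ Z) ⁻¹' {true}) = 1 / 2 := by
    simp [measureReal_def, measure_add_preimage_singleton hU hcZ hZ hunif hind']
  have hYm : μ⟦(U + c ∘ Z) ⁻¹' {true} | m⟧ =ᵐ[μ] fun _ ↦ 1 / 2 := halfY ▸
    condExp_preimage_ae_eq_of_indepFun hY hZ (indepFun_add_of_uniform hU hcZ hZ hunif hind')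
      (measurableSet_singleton true)
  have hB : MeasurableSet[m] B := ⟨_, hc (measurableSet_singleton false), rfl⟩
  have hAB : μ⟦B ∩ A | m⟧ =ᵐ[μ] B.indicator fun _ ↦ 1 / 2 := by
    rw [← Set.indicator_indicator]
    refine (condExp_indicator ((integrable_const 1).indicator (hU (measurableSet_singleton _)))
      hB).trans (hAm.mono fun ω hω ↦ ?_)
    by_cases hωB : ω ∈ B <;> simp [hωB, hω]
  have hAY : A ∩ (U + c ∘ Z) ⁻¹' {true} = B ∩ A := by
    ext ω
    simp only [A, B, Set.mem_inter_iff, Set.mem_preimage, Set.mem_singleton_iff, Pi.add_apply,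
      Function.comp_apply]
    cases U ω <;> cases c (Z ω) <;> decide
  have key := (condIndepFun_iff_condExp_inter_preimage_eq_mul hU hY).1 hcond
    {true} {true} (measurableSet_singleton _) (measurableSet_singleton _)
  rw [hAY] at key
  obtain ⟨ω, hω⟩ := (hAB.symm.trans (key.trans (hAm.mul hYm))).exists
  by_cases hωB : ω ∈ B <;> norm_num [hωB] at hω

end ProbabilityTheory

theorem parity_condIndep_iff_all_parents_general {Ω : Type*} [MeasurableSpace Ω]
    [StandardBorelSpace Ω] {P : Measure Ω} [IsProbabilityMeasure P]
    {n : ℕ} (X : Fin n → Ω → Bool)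
    (hX : ∀ i, Measurable (X i))
    (hIndep : iIndepFun X P)
    (hu : ∀ i, P (X i ⁻¹' {true}) = 1/2)
    (Y : Ω → Bool) (hY : Y = fun ω => (List.ofFn fun i => X i ω).foldr Bool.xor false)
    (i₀ : Fin n) :
    (∀ S : Finset (Fin n), S ⊂ Finset.univ.erase i₀ →
      CondIndepFun (MeasurableSpace.comap (fun ω => fun i : S => X i ω) MeasurableSpace.pi)
        ((measurable_pi_lambda _ fun i : S => hX i).comap_le) (X i₀) Y P) ∧
    ¬ CondIndepFun
        (MeasurableSpace.comap
          (fun ω => fun i : (Finset.univ.erase i₀) => X i ω) MeasurableSpace.pi)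
        ((measurable_pi_lambda _ fun i : (Finset.univ.erase i₀) => hX i).comap_le)
        (X i₀) Y P := by
  have hunif i := measure_preimage_bool_eq_half (hX i) (hu i)
  have hsum (T : Finset (Fin n)) : Measurable fun ω ↦ ∑ i : T, X i ω :=
    Finset.measurable_sum _ fun i _ ↦ hX i
  have hsplit (j : Fin n) : Y = X j + fun ω ↦ ∑ i : (Finset.univ.erase j : Finset _), X i ω := by
    funext ω
    simp only [hY, Pi.add_apply]
    rw [List.foldr_xor_ofFn_eq_sum, ← Finset.add_sum_erase _ _ (Finset.mem_univ j),
      ← Finset.sum_coe_sort]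
  have hYm : Measurable Y := hsplit i₀ ▸ (hX i₀).add (hsum _)
  constructor
  · intro S hS
    obtain ⟨j, hjT, hjS⟩ := Finset.exists_of_ssubset hS
    have hi₀j : i₀ ∈ Finset.univ.erase j :=
      Finset.mem_erase.2 ⟨(Finset.ne_of_mem_erase hjT).symm, Finset.mem_univ _⟩
    have hSj (i : S) : (i : Fin n) ∈ Finset.univ.erase j :=
      Finset.mem_erase.2 ⟨fun h ↦ hjS (h ▸ i.2), Finset.mem_univ _⟩
    have hXS : Measurable fun ω (i : S) ↦ X i ω := measurable_pi_lambda _ fun i ↦ hX i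
    have hind : IndepFun (X j)
        (fun ω ↦ (∑ i : (Finset.univ.erase j : Finset _), X i ω, X i₀ ω, fun i : S ↦ X i ω)) P :=
      (hIndep.indepFun_finset_of_notMem hX (Finset.notMem_erase j _)).comp measurable_id
        (measurable_of_countable fun v : ↥(Finset.univ.erase j) → Bool ↦
          (∑ i, v i, v ⟨i₀, hi₀j⟩, fun i : S ↦ v ⟨i, hSj i⟩))
    refine condIndepFun_of_indepFun_prod (hX i₀) hYm hXS ?_
    rw [hsplit j]
    exact (indepFun_add_of_uniform (hX j) (hsum _) ((hX i₀).prodMk hXS) (hunif j) hind).symm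
  · rw [hsplit i₀]
    exact not_condIndepFun_add_comp (Z := fun ω (i : (Finset.univ.erase i₀ : Finset _)) ↦ X i ω)
      (c := fun v ↦ ∑ i, v i) (hX i₀) (measurable_pi_lambda _ fun i ↦ hX i)
      (measurable_of_countable _)
      (hunif i₀) (hIndep.indepFun_finset_of_notMem hX (Finset.notMem_erase i₀ _))

/-- **Proposition 1 of the paper, parity case.**
For `n ≥ 2` mutually independent uniform Boolean sources on a standard Borel
probability space and the parity target `Y = X₁ XOR ⋯ XOR Xₙ`:
`X₁` is conditionally independent of `Y` given any **proper** subset of the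
remaining sources, but NOT conditionally independent of `Y` given **all**
remaining sources. -/
theorem parity_condIndep_iff_all_parents {Ω : Type*} [MeasurableSpace Ω]
    [StandardBorelSpace Ω] {P : Measure Ω} [IsProbabilityMeasure P]
    {n : ℕ} (hn : 2 ≤ n) (X : Fin n → Ω → Bool)
    (hX : ∀ i, Measurable (X i))
    (hIndep : iIndepFun X P)
    (hu : ∀ i, P (X i ⁻¹' {true}) = 1/2)
    (Y : Ω → Bool) (hY : Y = fun ω => (List.ofFn fun i => X i ω).foldr Bool.xor false)
    (i₀ : Fin n) (hi₀ : (i₀ : ℕ) = 0) :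
    (∀ S : Finset (Fin n), S ⊂ Finset.univ.erase i₀ →
      CondIndepFun (MeasurableSpace.comap (fun ω => fun i : S => X i ω) MeasurableSpace.pi)
        ((measurable_pi_lambda _ fun i : S => hX i).comap_le) (X i₀) Y P) ∧
    ¬ CondIndepFun
        (MeasurableSpace.comap
          (fun ω => fun i : (Finset.univ.erase i₀) => X i ω) MeasurableSpace.pi)
        ((measurable_pi_lambda _ fun i : (Finset.univ.erase i₀) => hX i).comap_le)
        (X i₀) Y P :=
  parity_condIndep_iff_all_parents_general X hX hIndep hu Y hY i₀
end
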